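/- Let P be a monic polynomial of degree d ≥ 2 over ℂ. There exists R > 1 such that for every z with |z| ≥ R, the orbit (P^k(z)) satisfies |P^{k+1}(z)| ≥ |P^k(z)|^{d}/2 ≥ |P^k(z)| for all k, the sequence d^{-k} log|P^k(z)| converges, and its limit h(z) satisfies h(z) > 0 and h(P(z)) = d · h(z). -/

import Mathlib

/-!
Beyond some radius `R > 2` a monic `P` of degree `d` satisfies `‖P w - w ^ d‖ ≤ ‖w‖ ^ d / 2`, so orbits
starting there stay there and obey `‖w‖ ^ d / 2 ≤ ‖P w‖ ≤ 2 ‖w‖ ^ d`. Hence `u k = log ‖P^[k] z‖`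
satisfies `|u (k + 1) - d * u k| ≤ log 2`: the increments of `u k / d ^ k` are geometric, and the
limit lies within `log 2 / (d - 1)` of `log ‖z‖ > log 2`. The functional equation is the index shift
`P^[k] (P z) = P^[k + 1] z`.
-/

open Polynomial Filter Topology Bornology

theorem le_pow_div_two {x : ℝ} (hx : 2 ≤ x) {n : ℕ} (hn : 2 ≤ n) : x ≤ x ^ n / 2 := by
  calc x = 2 * x / 2 := by ring
    _ ≤ x ^ 2 / 2 := by gcongr; nlinarith
    _ ≤ x ^ n / 2 := by gcongr; linarith

theorem abs_log_sub_mul_log_le {x y c : ℝ} {n : ℕ} (hx : 0 < x) (hc : 0 < c) (hlow : x ^ n / c ≤ y)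
    (hupp : y ≤ c * x ^ n) : |Real.log y - n * Real.log x| ≤ Real.log c := by
  have hxn : 0 < x ^ n := pow_pos hx n
  have h1 := Real.log_le_log (div_pos hxn hc) hlow
  have h2 := Real.log_le_log (div_pos hxn hc |>.trans_le hlow) hupp
  rw [Real.log_div hxn.ne' hc.ne', Real.log_pow] at h1
  rw [Real.log_mul hc.ne' hxn.ne', Real.log_pow] at h2
  exact abs_le.mpr ⟨by linarith, by linarith⟩

theorem exists_tendsto_div_pow_of_abs_sub_mul_le {u : ℕ → ℝ} {d c : ℝ} (hd : 1 < d)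
    (hu : ∀ k, |u (k + 1) - d * u k| ≤ c) :
    ∃ L, Tendsto (fun k => u k / d ^ k) atTop (𝓝 L) ∧ |u 0 - L| ≤ c / (d - 1) := by
  have hd0 : 0 < d := by linarith
  have hstep : ∀ k, dist (u k / d ^ k) (u (k + 1) / d ^ (k + 1)) ≤ c / d * (1 / d) ^ k := by
    intro k
    have hdk : 0 < d ^ (k + 1) := pow_pos hd0 _
    have : u k / d ^ k - u (k + 1) / d ^ (k + 1) = -(u (k + 1) - d * u k) / d ^ (k + 1) := by
      field_simp; ring
    rw [Real.dist_eq, this, abs_div, abs_neg, abs_of_pos hdk, div_le_iff₀ hdk]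
    calc |u (k + 1) - d * u k| ≤ c := hu k
      _ = c / d * (1 / d) ^ k * d ^ (k + 1) := by rw [one_div_pow, pow_succ]; field_simp
  have hr : 1 / d < 1 := (div_lt_one hd0).mpr hd
  obtain ⟨L, hL⟩ := cauchySeq_tendsto_of_complete (cauchySeq_of_le_geometric _ _ hr hstep)
  refine ⟨L, hL, ?_⟩
  have := dist_le_of_le_geometric_of_tendsto₀ _ _ hr hstep hL
  rw [Real.dist_eq] at this
  convert this using 1
  · simp
  · field_simp

namespace Polynomial

variable {𝕜 : Type*} [NormedField 𝕜] {P : 𝕜[X]} {R : ℝ}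

-- A junk value where the sequence diverges; it converges on escaping orbits.
noncomputable def potential (P : 𝕜[X]) (z : 𝕜) : ℝ :=
  limUnder atTop fun k : ℕ => Real.log ‖P.eval^[k] z‖ / (P.natDegree : ℝ) ^ k

theorem tendsto_log_norm_iterate_eval {z : 𝕜} {L : ℝ} (hd : P.natDegree ≠ 0)
    (hz : Tendsto (fun k : ℕ => Real.log ‖P.eval^[k] z‖ / (P.natDegree : ℝ) ^ k) atTop (𝓝 L)) :
    Tendsto (fun k : ℕ => Real.log ‖P.eval^[k] (P.eval z)‖ / (P.natDegree : ℝ) ^ k) atTop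
      (𝓝 (P.natDegree * L)) := by
  refine ((hz.comp (tendsto_add_atTop_nat 1)).const_mul (P.natDegree : ℝ)).congr fun k => ?_
  simp only [Function.comp_apply, ← Function.iterate_succ_apply, pow_succ]
  field_simp

def IsEscapeRadius (P : 𝕜[X]) (R : ℝ) : Prop :=
  2 < R ∧ ∀ w : 𝕜, R ≤ ‖w‖ → ‖P.eval w - w ^ P.natDegree‖ ≤ ‖w‖ ^ P.natDegree / 2

theorem Monic.exists_isEscapeRadius (hP : P.Monic) : ∃ R, IsEscapeRadius P R := by
  have hsmall : ∀ᶠ w in cobounded 𝕜, ‖P.eval w - w ^ P.natDegree‖ ≤ ‖w‖ ^ P.natDegree / 2 := by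
    filter_upwards [(isEquivalent_cobounded_leading_monomial (P := P)).isLittleO.def
      (by norm_num : (0 : ℝ) < 1 / 2)] with w hw
    simpa [hP.leadingCoeff, div_eq_inv_mul] using hw
  obtain ⟨R, -, hR⟩ := hasBasis_cobounded_norm.eventually_iff.mp hsmall
  exact ⟨max R 3, lt_max_of_lt_right (by norm_num), fun w hw => hR (le_of_max_le_left hw)⟩

namespace IsEscapeRadius

variable (hR : IsEscapeRadius P R)
include hR

section

variable {w : 𝕜} (hw : R ≤ ‖w‖)
include hw

theorem norm_pow_div_two_le : ‖w‖ ^ P.natDegree / 2 ≤ ‖P.eval w‖ := by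
  have := norm_sub_norm_le (w ^ P.natDegree) (P.eval w)
  rw [norm_sub_rev, norm_pow] at this
  linarith [hR.2 w hw]

theorem norm_eval_le : ‖P.eval w‖ ≤ 2 * ‖w‖ ^ P.natDegree := by
  have := norm_sub_norm_le (P.eval w) (w ^ P.natDegree)
  rw [norm_pow] at this
  linarith [hR.2 w hw, pow_nonneg (norm_nonneg w) P.natDegree]

end

variable (hd : 2 ≤ P.natDegree)
include hd

theorem le_norm_eval {w : 𝕜} (hw : R ≤ ‖w‖) : R ≤ ‖P.eval w‖ :=
  calc R ≤ ‖w‖ := hw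
    _ ≤ ‖w‖ ^ P.natDegree / 2 := le_pow_div_two (hR.1.le.trans hw) hd
    _ ≤ ‖P.eval w‖ := hR.norm_pow_div_two_le hw

theorem le_norm_iterate {z : 𝕜} (hz : R ≤ ‖z‖) (k : ℕ) : R ≤ ‖P.eval^[k] z‖ := by
  induction k with
  | zero => exact hz
  | succ k ih => rw [Function.iterate_succ_apply']; exact hR.le_norm_eval hd ih

theorem exists_tendsto_log_norm_iterate {z : 𝕜} (hz : R ≤ ‖z‖) :
    ∃ L, Tendsto (fun k : ℕ => Real.log ‖P.eval^[k] z‖ / (P.natDegree : ℝ) ^ k) atTop (𝓝 L) ∧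
      Real.log ‖z‖ - Real.log 2 ≤ L := by
  have hd' : (2 : ℝ) ≤ P.natDegree := by exact_mod_cast hd
  have hstep (k : ℕ) : |Real.log ‖P.eval^[k + 1] z‖ - P.natDegree * Real.log ‖P.eval^[k] z‖|
      ≤ Real.log 2 := by
    have hk := hR.le_norm_iterate hd hz k
    rw [Function.iterate_succ_apply']
    exact abs_log_sub_mul_log_le (by linarith [hR.1]) two_pos
      (hR.norm_pow_div_two_le hk) (hR.norm_eval_le hk)
  obtain ⟨L, hL, hL0⟩ := exists_tendsto_div_pow_of_abs_sub_mul_le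
    (u := fun k => Real.log ‖P.eval^[k] z‖) (by linarith) hstep
  refine ⟨L, hL, ?_⟩
  have hlog2 : Real.log 2 / (P.natDegree - 1) ≤ Real.log 2 :=
    div_le_self (Real.log_nonneg one_le_two) (by linarith)
  have := (abs_le.mp (hL0.trans hlog2)).2
  simp only [Function.iterate_zero_apply] at this
  linarith

end IsEscapeRadius

end Polynomial

theorem potential_escaping (d : ℕ) (hd : 2 ≤ d) (P : Polynomial ℂ) (hP : P.Monic)
    (hdeg : P.natDegree = d) :
    ∃ R > (1 : ℝ), ∃ h : ℂ → ℝ, ∀ z : ℂ, R ≤ ‖z‖ →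
      (∀ k : ℕ, ‖(P.eval)^[k] z‖ ^ d / 2 ≤ ‖(P.eval)^[k + 1] z‖ ∧
        ‖(P.eval)^[k] z‖ ≤ ‖(P.eval)^[k] z‖ ^ d / 2) ∧
      Tendsto (fun k : ℕ => Real.log ‖(P.eval)^[k] z‖ / (d : ℝ) ^ k) atTop (𝓝 (h z)) ∧
      0 < h z ∧ h (P.eval z) = d * h z := by
  subst hdeg
  obtain ⟨R, hR⟩ := hP.exists_isEscapeRadius
  refine ⟨R, by linarith [hR.1], P.potential, fun z hz => ?_⟩
  have horbit := hR.le_norm_iterate hd hz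
  obtain ⟨L, hL, hL0⟩ := hR.exists_tendsto_log_norm_iterate hd hz
  have hpot : P.potential z = L := hL.limUnder_eq
  refine ⟨fun k => ⟨?_, le_pow_div_two (hR.1.le.trans (horbit k)) hd⟩, hpot ▸ hL, ?_, ?_⟩
  · rw [Function.iterate_succ_apply']
    exact hR.norm_pow_div_two_le (horbit k)
  · have hlog : Real.log 2 < Real.log ‖z‖ := Real.log_lt_log two_pos (hR.1.trans_le hz)
    linarith
  · rw [hpot]
    exact (tendsto_log_norm_iterate_eval (by omega) hL).limUnder_eq
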